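/- Let X be an infinite-dimensional real Banach space that fails the Schur property, i.e., there exists a sequence in X converging weakly but not converging in norm. Then there exists an equivalent norm N on X such that (X, N) contains a super Δ-point: there is x₀ with N(x₀) = 1 such that for every relatively weakly open subset W of B_N = {y : N(y) ≤ 1} with x₀ ∈ W one has sup_{y ∈ W} N(x₀ − y) = 2. -/

import Mathlib

/-!
A weakly null sequence that is not norm null can be normalised inside the kernel of a functional
`f₀` norming a unit vector `z₀`. A gliding-hump selection then gives a subsequence `dₙ` and
uniformly bounded functionals `gₙ` with `gₙ z₀ = 0`, `gₙ dₙ = 1` and `gₙ dₘ` small for `m ≠ n`.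
Take as new unit ball the convex hull of a small ball and the points `±z₀`, `±(z₀ - dₙ)`.
Then `f₀` shows that `z₀` has new norm `1`, the points `z₀ - dₙ` lie in the new unit ball and
converge weakly to `z₀`, and `f₀ + 2gₙ` is almost bounded by `1` on the new ball while taking the
value `2` at `dₙ = z₀ - (z₀ - dₙ)`; so every weak neighbourhood of `z₀` in the ball contains
points at new distance almost `2` from `z₀`.
-/

open NormedSpace Topology Filter

/-- `N` is an equivalent norm on the normed space `Z`. -/
def IsEquivNorm (Z : Type*) [NormedAddCommGroup Z] [NormedSpace ℝ Z] (N : Z → ℝ) : Prop :=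
  (∀ z w : Z, N (z + w) ≤ N z + N w) ∧ (∀ (a : ℝ) (z : Z), N (a • z) = |a| * N z) ∧
  (∃ c C : ℝ, 0 < c ∧ 0 < C ∧ ∀ z : Z, c * ‖z‖ ≤ N z ∧ N z ≤ C * ‖z‖)

/-- The norm `N` on `Z` admits a super Δ-point: a point `z₀` with `N z₀ = 1` such that
every relatively weakly open subset of the `N`-unit ball containing `z₀` contains points
whose `N`-distance to `z₀` is arbitrarily close to `2`.  (The weak topology is unchanged
under equivalent renormings, so it is the weak topology of the original norm.) -/
def HasSuperDeltaPointForNorm (Z : Type*) [NormedAddCommGroup Z] [NormedSpace ℝ Z]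
    (N : Z → ℝ) : Prop :=
  ∃ z₀ : Z, N z₀ = 1 ∧ ∀ U : Set Z, IsOpen (toWeakSpace ℝ Z '' U) → z₀ ∈ U →
    sSup ((fun y => N (z₀ - y)) '' ({y : Z | N y ≤ 1} ∩ U)) = 2

open Metric Set Bornology

section

variable {X : Type*} [NormedAddCommGroup X] [NormedSpace ℝ X]

theorem norm_le_of_forall_dual_tendsto {v : ℕ → X} {x : X} {c : ℝ}
    (hv : ∀ f : StrongDual ℝ X, Tendsto (fun n => f (v n)) atTop (𝓝 (f x)))
    (hc : ∀ᶠ n in atTop, ‖v n‖ ≤ c) : ‖x‖ ≤ c := by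
  obtain ⟨f, hf, hfx⟩ := exists_dual_vector'' ℝ x
  have hfv : ∀ᶠ n in atTop, f (v n) ≤ c := hc.mono fun n hn =>
    (le_abs_self _).trans ((f.le_of_opNorm_le hf (v n)).trans (by simpa using hn))
  simpa [hfx] using le_of_tendsto (hv f) hfv

theorem tendsto_toWeakSpace_of_forall_dual_tendsto {v : ℕ → X} {x : X}
    (hv : ∀ f : StrongDual ℝ X, Tendsto (fun n => f (v n)) atTop (𝓝 (f x))) :
    Tendsto (fun n => toWeakSpace ℝ X (v n)) atTop (𝓝 (toWeakSpace ℝ X x)) :=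
  (IsInducing.induced _).tendsto_nhds_iff.mpr (tendsto_pi_nhds.mpr hv)

theorem exists_normalized_weaklyNull_subseq {v : ℕ → X} {E : Submodule ℝ X}
    (hv : ∀ f : StrongDual ℝ X, Tendsto (fun n => f (v n)) atTop (𝓝 0))
    (hv₀ : ¬ Tendsto v atTop (𝓝 0)) (hvE : ∀ n, v n ∈ E) :
    ∃ u : ℕ → X, (∀ f : StrongDual ℝ X, Tendsto (fun n => f (u n)) atTop (𝓝 0)) ∧
      ∀ n, ‖u n‖ = 1 ∧ u n ∈ E := by
  obtain ⟨ε, hε, hfreq⟩ : ∃ ε > 0, ∃ᶠ n in atTop, ε ≤ ‖v n‖ := by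
    simpa [Metric.tendsto_atTop, frequently_atTop] using hv₀
  obtain ⟨φ, hφ, hεφ⟩ := extraction_of_frequently_atTop hfreq
  have hpos n : 0 < ‖v (φ n)‖ := hε.trans_le (hεφ n)
  refine ⟨fun n => ‖v (φ n)‖⁻¹ • v (φ n), fun f => ?_, fun n =>
    ⟨by simp [norm_smul, (hpos n).ne'], E.smul_mem _ (hvE _)⟩⟩
  refine squeeze_zero_norm (a := fun n => ε⁻¹ * ‖f (v (φ n))‖) (fun n => ?_)
    (by simpa using ((hv f).comp hφ.tendsto_atTop).norm.const_mul ε⁻¹)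
  rw [map_smul, norm_smul, norm_inv, norm_norm]
  gcongr
  exact hεφ n

theorem exists_normalized_weaklyNull_ker {v : ℕ → X} {z₀ : X} {f₀ : StrongDual ℝ X}
    (hv : ∀ f : StrongDual ℝ X, Tendsto (fun n => f (v n)) atTop (𝓝 0))
    (hv₀ : ¬ Tendsto v atTop (𝓝 0)) (hf₀z₀ : f₀ z₀ = 1) :
    ∃ u : ℕ → X, (∀ f : StrongDual ℝ X, Tendsto (fun n => f (u n)) atTop (𝓝 0)) ∧
      ∀ n, ‖u n‖ = 1 ∧ f₀ (u n) = 0 := by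
  let w n := v n - f₀ (v n) • z₀
  have hw (f : StrongDual ℝ X) : Tendsto (fun n => f (w n)) atTop (𝓝 0) := by
    simpa [w] using (hv f).sub ((hv f₀).mul_const (f z₀))
  have hw₀ : ¬ Tendsto w atTop (𝓝 0) := fun h =>
    hv₀ (by simpa [w] using h.add ((hv f₀).smul_const z₀))
  exact exists_normalized_weaklyNull_subseq (E := LinearMap.ker (f₀ : X →ₗ[ℝ] ℝ)) hw hw₀
    fun n => by simp [w, hf₀z₀]

theorem exists_dual_eq_one_of_le_infDist {F : Submodule ℝ X} {x : X} {δ : ℝ} (hδ : 0 < δ)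
    (hx : δ ≤ infDist x F) :
    ∃ g : StrongDual ℝ X, ‖g‖ ≤ δ⁻¹ ∧ g x = 1 ∧ ∀ p ∈ F, g p = 0 := by
  have hnorm : ‖(Submodule.Quotient.mk x : X ⧸ F)‖ = infDist x F := QuotientAddGroup.norm_mk _
  obtain ⟨φ, hφ, hφx⟩ := exists_dual_vector ℝ (Submodule.Quotient.mk x : X ⧸ F) (by linarith)
  have hd : 0 < infDist x F := hδ.trans_le hx
  refine ⟨(infDist x F)⁻¹ • φ.comp F.mkQL, ?_, ?_, fun p hp => ?_⟩
  · refine ContinuousLinearMap.opNorm_le_bound _ (by positivity) fun y => ?_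
    calc ‖((infDist x F)⁻¹ • φ.comp F.mkQL) y‖
        = (infDist x F)⁻¹ * ‖φ (Submodule.Quotient.mk y)‖ := by simp [abs_of_pos hd]
      _ ≤ δ⁻¹ * ‖y‖ := by
        gcongr
        exact (φ.le_of_opNorm_le hφ.le _).trans
          (by simpa using Submodule.Quotient.norm_mk_le (S := F) y)
  · simp [hφx, hnorm, hd.ne']
  · simp [(Submodule.Quotient.mk_eq_zero F).mpr hp]

theorem frequently_le_infDist_of_weaklyNull {w : ℕ → X} {r R : ℝ}
    (hw : ∀ f : StrongDual ℝ X, Tendsto (fun n => f (w n)) atTop (𝓝 0))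
    (hwr : ∀ n, r ≤ ‖w n‖) (hwR : ∀ n, ‖w n‖ ≤ R) (F : Submodule ℝ X) [FiniteDimensional ℝ F] :
    ∃ᶠ n in atTop, r / 3 ≤ infDist (w n) F := by
  by_contra h
  have hnear : ∀ᶠ n in atTop, ∃ p : F, ‖w n - p‖ < r / 3 :=
    (not_frequently.mp h).mono fun n hn => by
      obtain ⟨p, hp, hdist⟩ := (infDist_lt_iff ⟨0, F.zero_mem⟩).mp (not_le.mp hn)
      exact ⟨⟨p, hp⟩, by rwa [dist_eq_norm] at hdist⟩
  obtain ⟨q, hq⟩ := hnear.choice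
  obtain ⟨n₀, hn₀⟩ := hq.exists
  have hr : 0 < r := by linarith [norm_nonneg (w n₀ - q n₀)]
  have hqR : ∀ᶠ n in atTop, q n ∈ closedBall (0 : F) (R + r / 3) := hq.mono fun n hn => by
    rw [mem_closedBall_zero_iff, Submodule.coe_norm]
    calc ‖(q n : X)‖ ≤ ‖w n‖ + ‖w n - q n‖ :=
          (norm_le_norm_add_norm_sub' _ (w n)).trans_eq (by rw [norm_sub_rev])
      _ ≤ R + r / 3 := by linarith [hwR n]
  obtain ⟨p, -, φ, hφ, hqp⟩ := (isCompact_closedBall _ _).tendsto_subseq' hqR.frequently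
  have hqp' : Tendsto (fun n => (q (φ n) : X)) atTop (𝓝 p) :=
    (continuous_subtype_val.tendsto _).comp hqp
  have hqφ := hφ.tendsto_atTop.eventually hq
  have hp : ‖(p : X)‖ ≤ r / 3 := by
    refine norm_le_of_forall_dual_tendsto (v := fun n => q (φ n) - w (φ n)) (fun f => ?_)
      (hqφ.mono fun n hn => by rw [norm_sub_rev]; exact hn.le)
    simpa using ((f.continuous.tendsto _).comp hqp').sub ((hw f).comp hφ.tendsto_atTop)
  have hclose : ∀ᶠ n in atTop, ‖(q (φ n) : X) - p‖ < r / 3 :=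
    (tendsto_iff_norm_sub_tendsto_zero.mp hqp').eventually (gt_mem_nhds (by positivity))
  obtain ⟨n, hn₁, hn₂⟩ := (hqφ.and hclose).exists
  have : ‖w (φ n)‖ ≤ ‖w (φ n) - q (φ n)‖ + ‖(q (φ n) : X) - p‖ + ‖(p : X)‖ :=
    (norm_add₃_le ..).trans_eq' (by congr 1; abel)
  linarith [hwr (φ n)]

theorem exists_almostBiorthogonal_subseq {w : ℕ → X} {r R : ℝ} (hr : 0 < r)
    (hw : ∀ f : StrongDual ℝ X, Tendsto (fun n => f (w n)) atTop (𝓝 0))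
    (hwr : ∀ n, r ≤ ‖w n‖) (hwR : ∀ n, ‖w n‖ ≤ R) (E : Submodule ℝ X) [FiniteDimensional ℝ E]
    {ε : ℕ → ℝ} (hε : ∀ n, 0 < ε n) :
    ∃ (k : ℕ → ℕ) (g : ℕ → StrongDual ℝ X), StrictMono k ∧
      (∀ n, ‖g n‖ ≤ 3 / r ∧ g n (w (k n)) = 1 ∧ ∀ x ∈ E, g n x = 0) ∧
      ∀ m n, m ≠ n → |g n (w (k m))| ≤ ε (k n) := by
  classical
  have hstep (t : Finset (ℕ × StrongDual ℝ X)) : ∃ y : ℕ × StrongDual ℝ X,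
      (‖y.2‖ ≤ 3 / r ∧ y.2 (w y.1) = 1 ∧ ∀ x ∈ E, y.2 x = 0) ∧
      ∀ x ∈ t, x.1 < y.1 ∧ y.2 (w x.1) = 0 ∧ |x.2 (w y.1)| ≤ ε x.1 := by
    let F := E ⊔ Submodule.span ℝ (t.image fun x => w x.1 : Set X)
    have hsmall : ∀ᶠ m in atTop, ∀ x ∈ t, |x.2 (w m)| ≤ ε x.1 :=
      (eventually_all_finset t).mpr fun x _ =>
        (hw x.2).abs.eventually (ge_mem_nhds (by simpa using hε x.1))
    obtain ⟨m, hmF, hmt, hmε⟩ := ((frequently_le_infDist_of_weaklyNull hw hwr hwR F).and_eventually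
      ((eventually_gt_atTop (t.sup Prod.fst)).and hsmall)).exists
    obtain ⟨g, hg, hgm, hgF⟩ := exists_dual_eq_one_of_le_infDist (by positivity) hmF
    refine ⟨(m, g), ⟨hg.trans_eq (inv_div _ _), hgm, fun x hx => hgF x (Submodule.mem_sup_left hx)⟩,
      fun x hx => ⟨(Finset.le_sup (f := Prod.fst) hx).trans_lt hmt, hgF _ ?_, hmε x hx⟩⟩
    exact Submodule.mem_sup_right (Submodule.subset_span (Finset.mem_image_of_mem _ hx))
  obtain ⟨s, hsP, hsr⟩ := exists_seq_of_forall_finset_exists _ _ fun t _ => hstep t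
  refine ⟨fun n => (s n).1, fun n => (s n).2, fun m n h => (hsr m n h).1, hsP, fun m n hmn => ?_⟩
  rcases hmn.lt_or_gt with h | h
  · simp [(hsr m n h).2.1, (hε _).le]
  · exact (hsr n m h).2.2

theorem le_mul_gauge_of_forall_le {K : Set X} (hK : Absorbent ℝ K) {f : StrongDual ℝ X} {a : ℝ}
    (ha : 0 < a) (hf : ∀ y ∈ K, f y ≤ a) (x : X) : f x ≤ a * gauge K x := by
  rw [← div_le_iff₀' ha]
  refine le_csInf hK.gauge_set_nonempty ?_
  rintro t ⟨ht, y, hy, rfl⟩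
  rw [div_le_iff₀' ha, map_smul, smul_eq_mul]
  nlinarith [hf y hy]

theorem isEquivNorm_gauge {K : Set X} {δ : ℝ} (hconv : Convex ℝ K) (hneg : ∀ x ∈ K, -x ∈ K)
    (hδ : 0 < δ) (hball : ball (0 : X) δ ⊆ K) (hbdd : IsBounded K) : IsEquivNorm X (gauge K) := by
  have habs : Absorbent ℝ K := (absorbent_ball_zero hδ).mono hball
  obtain ⟨ρ, hρ⟩ := (isBounded_iff_subset_closedBall 0).mp hbdd
  have hρ' : K ⊆ closedBall 0 (max ρ 1) := hρ.trans (closedBall_subset_closedBall (le_max_left _ _))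
  refine ⟨gauge_add_le hconv habs, fun a z => ?_, (max ρ 1)⁻¹, δ⁻¹, by positivity, by positivity,
    fun z => ⟨?_, ?_⟩⟩
  · simpa using gauge_smul ((balanced_iff_neg_mem hconv).mpr hneg) a z
  · simpa [div_eq_inv_mul] using le_gauge_of_subset_closedBall habs (by positivity) hρ' (x := z)
  · simpa [gauge_ball hδ.le, div_eq_inv_mul] using gauge_mono (absorbent_ball_zero hδ) hball z

def ballHull (δ : ℝ) (T : Set X) : Set X := convexHull ℝ (ball 0 δ ∪ (T ∪ -T))

variable {δ : ℝ} {T : Set X}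

theorem subset_ballHull : T ⊆ ballHull δ T :=
  subset_union_left.trans (subset_union_right.trans (subset_convexHull ℝ _))

theorem ball_subset_ballHull : ball 0 δ ⊆ ballHull δ T :=
  subset_union_left.trans (subset_convexHull ℝ _)

theorem neg_mem_ballHull {x : X} (hx : x ∈ ballHull δ T) : -x ∈ ballHull δ T := by
  have hsymm : -(ball (0 : X) δ ∪ (T ∪ -T)) = ball 0 δ ∪ (T ∪ -T) := by
    simp [Set.union_neg, union_comm (-T)]
  rw [ballHull, ← hsymm, convexHull_neg]
  exact neg_mem_neg.mpr hx

theorem isEquivNorm_gauge_ballHull (hδ : 0 < δ) (hT : IsBounded T) :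
    IsEquivNorm X (gauge (ballHull δ T)) :=
  isEquivNorm_gauge (convex_convexHull ℝ _) (fun _ => neg_mem_ballHull) hδ ball_subset_ballHull
    (isBounded_convexHull.mpr (isBounded_ball.union (hT.union hT.neg)))

theorem le_mul_gauge_ballHull (hδ : 0 < δ) {f : StrongDual ℝ X} {a : ℝ} (ha : 0 < a)
    (hfδ : ‖f‖ * δ ≤ a) (hfT : ∀ t ∈ T, |f t| ≤ a) (x : X) :
    f x ≤ a * gauge (ballHull δ T) x := by
  refine le_mul_gauge_of_forall_le ((absorbent_ball_zero hδ).mono ball_subset_ballHull) ha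
    (fun y hy => convexHull_min ?_ (convex_halfSpace_le f.toLinearMap.isLinear a) hy) x
  rintro y (hy | hy | hy)
  · exact (le_abs_self _).trans ((f.le_opNorm y).trans (by
      rw [mem_ball_zero_iff] at hy; nlinarith [norm_nonneg f]))
  · exact (le_abs_self _).trans (hfT y hy)
  · simpa using (neg_le_abs _).trans (hfT _ hy)

theorem gauge_ballHull_eq_one (hδ : 0 < δ) {f : StrongDual ℝ X} (hfδ : ‖f‖ * δ ≤ 1)
    (hfT : ∀ t ∈ T, |f t| ≤ 1) {x : X} (hxT : x ∈ T) (hfx : f x = 1) :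
    gauge (ballHull δ T) x = 1 :=
  le_antisymm (gauge_le_one_of_mem (subset_ballHull hxT))
    (by simpa [hfx] using le_mul_gauge_ballHull hδ one_pos hfδ hfT x)

theorem hasSuperDeltaPointForNorm_of_tendsto {N : X → ℝ}
    (hadd : ∀ x y, N (x + y) ≤ N x + N y) (hneg : ∀ x, N (-x) = N x) {z₀ : X} (hz₀ : N z₀ = 1)
    {y : ℕ → X} (hy : ∀ n, N (y n) ≤ 1)
    (hyz₀ : ∀ f : StrongDual ℝ X, Tendsto (fun n => f (y n)) atTop (𝓝 (f z₀)))
    {b : ℕ → ℝ} (hb : Tendsto b atTop (𝓝 2)) (hby : ∀ n, b n ≤ N (z₀ - y n)) :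
    HasSuperDeltaPointForNorm X N := by
  refine ⟨z₀, hz₀, fun U hU hz₀U => ?_⟩
  have hle : ∀ s ∈ (fun y => N (z₀ - y)) '' ({y | N y ≤ 1} ∩ U), s ≤ 2 := by
    rintro _ ⟨y, ⟨hy, -⟩, rfl⟩
    have := hadd z₀ (-y)
    rw [hneg, ← sub_eq_add_neg] at this
    exact this.trans (by rw [hz₀]; linarith [show N y ≤ 1 from hy])
  have hyU : ∀ᶠ n in atTop, y n ∈ U :=
    ((tendsto_toWeakSpace_of_forall_dual_tendsto hyz₀).eventually
      (hU.mem_nhds ⟨z₀, hz₀U, rfl⟩)).mono fun n ⟨v, hv, hvy⟩ => (toWeakSpace ℝ X).injective hvy ▸ hv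
  refine le_antisymm (csSup_le ⟨_, z₀, ⟨hz₀.le, hz₀U⟩, rfl⟩ hle) (le_of_tendsto hb ?_)
  exact hyU.mono fun n hn => (hby n).trans (le_csSup ⟨2, hle⟩ ⟨y n, ⟨hy n, hn⟩, rfl⟩)

theorem two_div_le_gauge_ballHull {z₀ : X} {f₀ h : StrongDual ℝ X} {d : ℕ → X} {n : ℕ}
    {M ε : ℝ} (hf₀ : ‖f₀‖ ≤ 1) (hf₀z₀ : f₀ z₀ = 1) (hf₀d : ∀ m, f₀ (d m) = 0)
    (hhM : ‖h‖ ≤ M) (hhz₀ : h z₀ = 0) (hhd : h (d n) = 1) (hhd' : ∀ m, m ≠ n → |h (d m)| ≤ ε)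
    (hδ : 0 < δ) (hMδ : (1 + 2 * M) * δ ≤ 1) :
    2 / (1 + 2 * ε) ≤ gauge (ballHull δ (insert z₀ (range fun m => z₀ - d m))) (d n) := by
  have hε : 0 ≤ ε := (abs_nonneg _).trans (hhd' (n + 1) (by omega))
  have hGδ : ‖f₀ + (2 : ℝ) • h‖ * δ ≤ 1 + 2 * ε := calc
    ‖f₀ + (2 : ℝ) • h‖ * δ ≤ (1 + 2 * M) * δ := by
      gcongr
      exact (norm_add_le _ _).trans (by rw [norm_smul, Real.norm_two]; linarith)
    _ ≤ 1 + 2 * ε := by linarith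
  have hGT : ∀ t ∈ insert z₀ (range fun m => z₀ - d m), |(f₀ + (2 : ℝ) • h) t| ≤ 1 + 2 * ε := by
    rintro _ (rfl | ⟨m, rfl⟩)
    · simpa [hf₀z₀, hhz₀] using hε
    · have hval : (f₀ + (2 : ℝ) • h) (z₀ - d m) = 1 - 2 * h (d m) := by
        simp [hf₀z₀, hhz₀, hf₀d, sub_eq_add_neg]
      rw [hval]
      rcases eq_or_ne m n with rfl | hmn
      · norm_num [hhd, hε]
      · refine (abs_sub _ _).trans ?_
        rw [abs_one, abs_mul, abs_two]
        linarith [hhd' m hmn]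
  have := le_mul_gauge_ballHull hδ (by positivity) hGδ hGT (d n)
  rw [div_le_iff₀ (by positivity)]
  simpa [hf₀d, hhd, mul_comm] using this

theorem exists_isEquivNorm_hasSuperDeltaPointForNorm {z₀ : X} {f₀ : StrongDual ℝ X}
    {d : ℕ → X} {g : ℕ → StrongDual ℝ X} {R M : ℝ} {η : ℕ → ℝ}
    (hf₀ : ‖f₀‖ ≤ 1) (hf₀z₀ : f₀ z₀ = 1) (hf₀d : ∀ n, f₀ (d n) = 0)
    (hd : ∀ f : StrongDual ℝ X, Tendsto (fun n => f (d n)) atTop (𝓝 0)) (hdR : ∀ n, ‖d n‖ ≤ R)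
    (hgM : ∀ n, ‖g n‖ ≤ M) (hgz₀ : ∀ n, g n z₀ = 0) (hgd : ∀ n, g n (d n) = 1)
    (hgd' : ∀ m n, m ≠ n → |g n (d m)| ≤ η n) (hη : Tendsto η atTop (𝓝 0)) :
    ∃ N : X → ℝ, IsEquivNorm X N ∧ HasSuperDeltaPointForNorm X N := by
  set T := insert z₀ (range fun n => z₀ - d n)
  have hM : 0 ≤ M := (norm_nonneg _).trans (hgM 0)
  set δ := (1 + 2 * M)⁻¹
  have hδ : 0 < δ := by positivity
  have hMδ : (1 + 2 * M) * δ = 1 := mul_inv_cancel₀ (by positivity)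
  have hTb : IsBounded T := by
    refine IsBounded.insert (isBounded_iff_forall_norm_le.mpr ⟨‖z₀‖ + R, ?_⟩) z₀
    rintro _ ⟨n, rfl⟩
    exact (norm_sub_le _ _).trans (by linarith [hdR n])
  have hK := isEquivNorm_gauge_ballHull hδ hTb
  have hz₀ : gauge (ballHull δ T) z₀ = 1 :=
    gauge_ballHull_eq_one hδ (by nlinarith [norm_nonneg f₀])
      (by rintro _ (rfl | ⟨n, rfl⟩) <;> simp [hf₀z₀, hf₀d]) (mem_insert _ _) hf₀z₀
  refine ⟨_, hK, hasSuperDeltaPointForNorm_of_tendsto hK.1 (gauge_neg fun _ => neg_mem_ballHull)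
    hz₀ (fun n => gauge_le_one_of_mem (subset_ballHull (mem_insert_of_mem _ ⟨n, rfl⟩)))
    (fun f => ?_) (b := fun n => 2 / (1 + 2 * η n)) ?_ fun n => ?_⟩
  · simpa using tendsto_const_nhds.sub (hd f)
  · simpa [Pi.div_def] using (tendsto_const_nhds (x := (2 : ℝ))).div
      (tendsto_const_nhds.add (hη.const_mul 2)) (by norm_num : (1 : ℝ) + 2 * 0 ≠ 0)
  · simpa using two_div_le_gauge_ballHull hf₀ hf₀z₀ hf₀d (hgM n) (hgz₀ n) (hgd n)
      (fun m hm => hgd' m n hm) hδ hMδ.le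

end

theorem renorming_superDeltaPoint_of_not_schur_general
    (X : Type*) [NormedAddCommGroup X] [NormedSpace ℝ X]
    (hschur : ∃ (xs : ℕ → X) (a : X),
      (∀ f : StrongDual ℝ X, Tendsto (fun n => f (xs n)) atTop (nhds (f a))) ∧
      ¬ Tendsto xs atTop (nhds a)) :
    ∃ N : X → ℝ, IsEquivNorm X N ∧ HasSuperDeltaPointForNorm X N := by
  obtain ⟨xs, a, hwk, hnc⟩ := hschur
  have hv (f : StrongDual ℝ X) : Tendsto (fun n => f (xs n - a)) atTop (𝓝 0) := by
    simpa using (hwk f).sub_const (f a)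
  have hv₀ : ¬ Tendsto (fun n => xs n - a) atTop (𝓝 0) := by rwa [tendsto_sub_nhds_zero_iff]
  have : Nontrivial X := by
    by_contra h
    rw [not_nontrivial_iff_subsingleton] at h
    exact hnc (tendsto_const_nhds.congr fun n => Subsingleton.elim _ _)
  obtain ⟨z₀, hz₀⟩ := exists_norm_eq X zero_le_one
  obtain ⟨f₀, hf₀, hf₀z₀⟩ := exists_dual_vector'' ℝ z₀
  replace hf₀z₀ : f₀ z₀ = 1 := by simpa [hz₀] using hf₀z₀
  obtain ⟨u, hu, hu₁⟩ := exists_normalized_weaklyNull_ker hv hv₀ hf₀z₀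
  obtain ⟨k, g, hk, hg, hgu⟩ := exists_almostBiorthogonal_subseq one_pos hu
    (fun n => (hu₁ n).1.ge) (fun n => (hu₁ n).1.le) (ℝ ∙ z₀) (ε := fun n => (1 / 2 : ℝ) ^ n)
    fun n => by positivity
  exact exists_isEquivNorm_hasSuperDeltaPointForNorm hf₀ hf₀z₀ (fun n => (hu₁ (k n)).2)
    (fun f => (hu f).comp hk.tendsto_atTop) (fun n => (hu₁ (k n)).1.le) (fun n => (hg n).1)
    (fun n => (hg n).2.2 z₀ (Submodule.mem_span_singleton_self z₀)) (fun n => (hg n).2.1) hgu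
    ((tendsto_pow_atTop_nhds_zero_of_lt_one (by norm_num) (by norm_num)).comp hk.tendsto_atTop)

/-- Every infinite-dimensional real Banach space failing the Schur property admits an
equivalent norm with a super Δ-point. -/
theorem renorming_superDeltaPoint_of_not_schur
    (X : Type*) [NormedAddCommGroup X] [NormedSpace ℝ X] [CompleteSpace X]
    (hinf : ¬ FiniteDimensional ℝ X)
    (hschur : ∃ (xs : ℕ → X) (a : X),
      (∀ f : StrongDual ℝ X, Tendsto (fun n => f (xs n)) atTop (nhds (f a))) ∧
      ¬ Tendsto xs atTop (nhds a)) :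
    ∃ N : X → ℝ, IsEquivNorm X N ∧ HasSuperDeltaPointForNorm X N :=
  renorming_superDeltaPoint_of_not_schur_general X hschur
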